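/- (Placing one more queen preserves correctness.) Let i ≥ 0 and let cs, us, ds be ground terms. Suppose (cs, us, ds) is correct up to i w.r.t. i + 1, the numerals ⌜1⌝,…,⌜i+1⌝ are all members of cs, and for some l ≥ 1 the numeral ⌜i+1⌝ is the l-th member of each of cs, us, and ds. Then (cs, us, ds) is correct up to i + 1 w.r.t. i + 1. -/
import Mathlib


/-- Ground terms of the n-queens program. -/
inductive Term : Type where
  | zero : Term
  | succ : Term → Term
  | nil  : Term
  | cons : Term → Term → Term

/-- The numeral `⌜n⌝`: `succ` applied `n` times to `zero`. -/
def numeral : ℕ → Term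
  | 0 => Term.zero
  | n + 1 => Term.succ (numeral n)

/-- `NthMember k e t`: `e` is the `k`-th member (`k ≥ 1`) of the term `t`. -/
inductive NthMember : ℕ → Term → Term → Prop where
  | head (e t' : Term) : NthMember 1 e (Term.cons e t')
  | tail {k : ℕ} {e t' : Term} (e₁ : Term) :
      NthMember k e t' → NthMember (k + 1) e (Term.cons e₁ t')

/-- `e` is a member of `t`. -/
def IsMember (e t : Term) : Prop := ∃ k : ℕ, 1 ≤ k ∧ NthMember k e t

/-- `t` is a list of length `n`. -/
inductive ListOfLength : ℕ → Term → Prop where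
  | nil : ListOfLength 0 Term.nil
  | cons {n : ℕ} {t : Term} (e : Term) :
      ListOfLength n t → ListOfLength (n + 1) (Term.cons e t)

/-- `t` is a list (of some length). -/
def IsList (t : Term) : Prop := ∃ n : ℕ, ListOfLength n t

/-- `t` is a list of pairwise distinct members. -/
def DistinctList (t : Term) : Prop :=
  IsList t ∧
  ∀ (k k' : ℕ) (e e' : Term),
    NthMember k e t → NthMember k' e' t → k ≠ k' → e ≠ e'

/-- The triple `(cs, us, ds)` is correct up to `m` w.r.t. `i`
(`0 ≤ m ≤ i`).  The up-diagonal number of queen `j` sitting at the `k`-th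
column is the integer `k + j - i`, the down-diagonal number is `k + i - j`. -/
def CorrectUpTo (m i : ℕ) (cs us ds : Term) : Prop :=
  m ≤ i ∧
  DistinctList cs ∧
  (∀ j : ℕ, 1 ≤ j → j ≤ m → IsMember (numeral j) cs) ∧
  -- the up-diagonal numbers of 1,…,m are pairwise distinct
  (∀ j j' k k' : ℕ, 1 ≤ j → j ≤ m → 1 ≤ j' → j' ≤ m → j ≠ j' →
    NthMember k (numeral j) cs → NthMember k' (numeral j') cs →
    (k : ℤ) + j - i ≠ (k' : ℤ) + j' - i) ∧
  -- the down-diagonal numbers of 1,…,m are pairwise distinct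
  (∀ j j' k k' : ℕ, 1 ≤ j → j ≤ m → 1 ≤ j' → j' ≤ m → j ≠ j' →
    NthMember k (numeral j) cs → NthMember k' (numeral j') cs →
    (k : ℤ) + i - j ≠ (k' : ℤ) + i - j') ∧
  -- positive up-diagonal numbers are recorded in us
  (∀ j k l : ℕ, 1 ≤ j → j ≤ m → NthMember k (numeral j) cs →
    (l : ℤ) = (k : ℤ) + j - i → 0 < l → NthMember l (numeral j) us) ∧
  -- positive down-diagonal numbers are recorded in ds
  (∀ j k l : ℕ, 1 ≤ j → j ≤ m → NthMember k (numeral j) cs →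
    (l : ℤ) = (k : ℤ) + i - j → 0 < l → NthMember l (numeral j) ds)

/-- Ground atoms. -/
inductive Atom : Type where
  | pq  : Term → Term → Term → Term → Atom
  | pqs : Term → Term → Term → Term → Atom

/-- `S` is an (Herbrand) model of the ground definite program `P`:
for every clause `(H, B) ∈ P` whose body atoms all lie in `S`, also `H ∈ S`. -/
def IsModel {A : Type} (P : Set (A × List A)) (S : Set A) : Prop :=
  ∀ (H : A) (B : List A), (H, B) ∈ P → (∀ b ∈ B, b ∈ S) → H ∈ S

/-- The least Herbrand model of `P` (the least set of atoms closed
under all the clauses of `P`). -/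
def LeastModel {A : Type} (P : Set (A × List A)) : Set A :=
  ⋂₀ { S : Set A | IsModel P S }

/-- The ground instances of the four clauses of the program NQUEENS. -/
inductive NQClause : Atom × List Atom → Prop where
  | c1 (x y z : Term) :
      NQClause (Atom.pqs Term.zero x y z, [])
  | c2 (i cs us ds u d : Term) :
      NQClause (Atom.pqs (Term.succ i) cs us (Term.cons d ds),
        [Atom.pqs i cs (Term.cons u us) ds, Atom.pq (Term.succ i) cs us ds])
  | c3 (i c u d : Term) :
      NQClause (Atom.pq i (Term.cons i c) (Term.cons i u) (Term.cons i d), [])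
  | c4 (i cs us ds c u d : Term) :
      NQClause (Atom.pq i (Term.cons c cs) (Term.cons u us) (Term.cons d ds),
        [Atom.pq i cs us ds])

/-- The program NQUEENS as a set of ground clauses. -/
def NQUEENS : Set (Atom × List Atom) := { cl | NQClause cl }

/-- The ground instances of the two clauses defining `pq`. -/
inductive PQClause : Atom × List Atom → Prop where
  | c3 (i c u d : Term) :
      PQClause (Atom.pq i (Term.cons i c) (Term.cons i u) (Term.cons i d), [])
  | c4 (i cs us ds c u d : Term) :
      PQClause (Atom.pq i (Term.cons c cs) (Term.cons u us) (Term.cons d ds),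
        [Atom.pq i cs us ds])

/-- The program defining `pq`, as a set of ground clauses. -/
def PQprog : Set (Atom × List Atom) := { cl | PQClause cl }

/-- The specification `S_pq`. -/
def SpecPq : Set Atom :=
  { a | ∃ (i cs us ds : Term) (k : ℕ), 1 ≤ k ∧ a = Atom.pq i cs us ds ∧
        NthMember k i cs ∧ NthMember k i us ∧ NthMember k i ds }

/-- The specification `S_pqs` (for correctness). -/
def SpecPqs : Set Atom :=
  { a | ∃ cs us ds : Term, a = Atom.pqs Term.zero cs us ds } ∪
  { a | ∃ (i : ℕ) (cs us t ds : Term), 1 ≤ i ∧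
        a = Atom.pqs (numeral i) cs us (Term.cons t ds) ∧
        (∀ j : ℕ, 1 ≤ j → j ≤ i → IsMember (numeral j) cs) ∧
        (DistinctList cs → CorrectUpTo i i cs us ds) }

/-- The specification `S = S_pq ∪ S_pqs` (for correctness). -/
def Spec : Set Atom := SpecPq ∪ SpecPqs

/-- The specification `S⁰` (for completeness). -/
def Spec0 : Set Atom :=
  SpecPq ∪ { a | ∃ cs us ds : Term, a = Atom.pqs Term.zero cs us ds } ∪
  { a | ∃ (i : ℕ) (cs us t ds : Term), 1 ≤ i ∧
        a = Atom.pqs (numeral i) cs us (Term.cons t ds) ∧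
        CorrectUpTo i i cs us ds }

/-- The size function on terms. -/
def tsize : Term → ℕ
  | Term.zero => 0
  | Term.nil => 0
  | Term.succ t => 1 + tsize t
  | Term.cons _ t => 1 + tsize t

/-- The level mapping on ground atoms. -/
def level : Atom → ℕ
  | Atom.pq _ cs _ _ => tsize cs
  | Atom.pqs i cs _ _ => tsize i + tsize cs

lemma numeral_inj : ∀ {m n : ℕ}, numeral m = numeral n → m = n
  | 0, 0, _ => rfl
  | m + 1, n + 1, h => by
      simp only [numeral] at h
      exact congrArg Nat.succ (numeral_inj (Term.succ.inj h))
  | 0, n + 1, h => by simp [numeral] at h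
  | m + 1, 0, h => by simp [numeral] at h

lemma nth_pos {k : ℕ} {e t : Term} (h : NthMember k e t) : 1 ≤ k := by
  induction h <;> omega

lemma nth_fun : ∀ {k : ℕ} {e e' t : Term},
    NthMember k e t → NthMember k e' t → e = e' := by
  intro k e e' t h
  induction h with
  | head e t' =>
      intro h'
      cases h' with
      | head => rfl
      | tail _ h'' => exact absurd (nth_pos h'') (by omega)
  | tail e₁ h ih =>
      intro h'
      cases h' with
      | head => exact absurd (nth_pos h) (by omega)
      | tail _ h'' => exact ih h''

/-- Placing one more queen preserves correctness. -/
theorem place_one_more_queen (i : ℕ) (cs us ds : Term)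
    (h : CorrectUpTo i (i + 1) cs us ds)
    (hmem : ∀ j : ℕ, 1 ≤ j → j ≤ i + 1 → IsMember (numeral j) cs)
    (hq : ∃ l : ℕ, 1 ≤ l ∧ NthMember l (numeral (i + 1)) cs ∧
      NthMember l (numeral (i + 1)) us ∧ NthMember l (numeral (i + 1)) ds) :
    CorrectUpTo (i + 1) (i + 1) cs us ds := by
  obtain ⟨hmi, hdl, _, hup, hdn, hus, hds⟩ := h
  obtain ⟨l, hl1, hcl, hul, hdll⟩ := hq
  -- position of numeral (i+1) in cs is unique
  have hpos : ∀ k : ℕ, NthMember k (numeral (i + 1)) cs → k = l := by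
    intro k hk
    by_contra hne
    exact hdl.2 k l _ _ hk hcl hne rfl
  refine ⟨le_refl _, hdl, fun j h1 h2 => hmem j h1 h2, ?_, ?_, ?_, ?_⟩
  · -- up-diagonals distinct
    intro j j' k k' h1 h2 h1' h2' hjj' hk hk'
    rcases Nat.lt_or_ge j (i + 1) with hj | hj
    · rcases Nat.lt_or_ge j' (i + 1) with hj' | hj'
      · exact hup j j' k k' h1 (by omega) h1' (by omega) hjj' hk hk'
      · -- j' = i + 1
        have hj'e : j' = i + 1 := by omega
        subst hj'e
        have hk'l := (hpos k' hk').symm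
        subst hk'l
        intro heq
        have hkeq : (l : ℤ) = (k : ℤ) + j - (i + 1) := by push_cast at heq ⊢; omega
        have hlu := hus j k l h1 (by omega) hk hkeq (by omega)
        have := nth_fun hlu hul
        exact absurd (numeral_inj this) (by omega)
    · have hje : j = i + 1 := by omega
      subst hje
      have hkl := (hpos k hk).symm
      subst hkl
      intro heq
      have hkeq : (l : ℤ) = (k' : ℤ) + j' - (i + 1) := by push_cast at heq ⊢; omega
      have hj' : j' ≤ i := by omega
      have hlu := hus j' k' l h1' hj' hk' hkeq (by omega)
      have := nth_fun hlu hul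
      exact absurd (numeral_inj this) (by omega)
  · -- down-diagonals distinct
    intro j j' k k' h1 h2 h1' h2' hjj' hk hk'
    rcases Nat.lt_or_ge j (i + 1) with hj | hj
    · rcases Nat.lt_or_ge j' (i + 1) with hj' | hj'
      · exact hdn j j' k k' h1 (by omega) h1' (by omega) hjj' hk hk'
      · have hj'e : j' = i + 1 := by omega
        subst hj'e
        have hk'l := (hpos k' hk').symm
        subst hk'l
        intro heq
        have hkeq : (l : ℤ) = (k : ℤ) + (i + 1) - j := by push_cast at heq ⊢; omega
        have hld := hds j k l h1 (by omega) hk hkeq (by omega)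
        have := nth_fun hld hdll
        exact absurd (numeral_inj this) (by omega)
    · have hje : j = i + 1 := by omega
      subst hje
      have hkl := (hpos k hk).symm
      subst hkl
      intro heq
      have hkeq : (l : ℤ) = (k' : ℤ) + (i + 1) - j' := by push_cast at heq ⊢; omega
      have hj' : j' ≤ i := by omega
      have hld := hds j' k' l h1' hj' hk' hkeq (by omega)
      have := nth_fun hld hdll
      exact absurd (numeral_inj this) (by omega)
  · -- up-diagonals recorded in us
    intro j k l' h1 h2 hk hl' hl'pos
    rcases Nat.lt_or_ge j (i + 1) with hj | hj
    · exact hus j k l' h1 (by omega) hk hl' hl'pos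
    · have hje : j = i + 1 := by omega
      subst hje
      have hkl := (hpos k hk).symm
      subst hkl
      have : l' = l := by push_cast at hl'; omega
      subst this
      exact hul
  · -- down-diagonals recorded in ds
    intro j k l' h1 h2 hk hl' hl'pos
    rcases Nat.lt_or_ge j (i + 1) with hj | hj
    · exact hds j k l' h1 (by omega) hk hl' hl'pos
    · have hje : j = i + 1 := by omega
      subst hje
      have hkl := (hpos k hk).symm
      subst hkl
      have : l' = l := by push_cast at hl'; omega
      subst this
      exact hdll
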